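/- arXiv:2212.06911 — 2 statements merged into one kernel-verified Lean document; each statement's English description precedes it below -/
import Mathlib

section
/- Let C_1, …, C_m ⊆ ℝⁿ be closed convex sets with C := ∩_{i=1}^m C_i ≠ ∅. Let ℓ(k), r(k) ∈ {1, …, m} be index sequences with {ℓ(k)} almost cyclic, i.e. there exists an integer Q ≥ m such that for all k ≥ 0, {1, …, m} ⊆ {ℓ(k+1), ℓ(k+2), …, ℓ(k+Q)}. Let {x^k} be generated from any x^0 ∈ ℝⁿ by x^{k+1} := T_{C_{ℓ(k)}, C_{r(k)}}(x^k). Then there exists x* ∈ C such that x^k → x*. -/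
noncomputable section

open Filter Metric RealInnerProductSpace

/-- Euclidean space ℝⁿ. -/
abbrev Euc (n : ℕ) := EuclideanSpace ℝ (Fin n)

/-- `P` is the metric projection onto `A`: `P x` is a point of `A` nearest to `x`. -/
def IsProjection {n : ℕ} (A : Set (Euc n)) (P : Euc n → Euc n) : Prop :=
  ∀ x, P x ∈ A ∧ ∀ a ∈ A, ‖x - P x‖ ≤ ‖x - a‖

/-- Reflection `R_A = 2 P_A - Id`, given the projection `P = P_A`. -/
def reflect {n : ℕ} (P : Euc n → Euc n) (x : Euc n) : Euc n := (2 : ℝ) • P x - x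

/-- `Z̄_{A,B} = Z̃_{A,B} ∘ Z_{A,B}`, where `Z_{A,B} = P_A ∘ P_B` and
`Z̃_{A,B} = (1/2)(P_A + P_B)`. -/
def Zbar {n : ℕ} (PA PB : Euc n → Euc n) (x : Euc n) : Euc n :=
  (2⁻¹ : ℝ) • (PA (PA (PB x)) + PB (PA (PB x)))

/-- `c` is the circumcenter of `w`, `R_A w`, `R_B w`: it lies in the affine hull of these
three points and is equidistant from them. -/
def IsCircumcenter {n : ℕ} (PA PB : Euc n → Euc n) (w c : Euc n) : Prop :=
  c ∈ affineSpan ℝ ({w, reflect PA w, reflect PB w} : Set (Euc n)) ∧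
    ‖c - w‖ = ‖c - reflect PA w‖ ∧ ‖c - w‖ = ‖c - reflect PB w‖

section Aux

set_option maxHeartbeats 1000000

variable {n : ℕ}

lemma proj_inner {A : Set (Euc n)} {P : Euc n → Euc n}
    (hA : Convex ℝ A) (hP : IsProjection A P) (x : Euc n) :
    ∀ a ∈ A, ⟪x - P x, a - P x⟫ ≤ 0 := by
  have hPx := (hP x).1
  have hmin := (hP x).2
  haveI : Nonempty A := ⟨⟨P x, hPx⟩⟩
  have hbdd : BddBelow (Set.range fun w : A => ‖x - (w : Euc n)‖) := by
    refine ⟨0, ?_⟩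
    rintro y ⟨w, rfl⟩
    exact norm_nonneg _
  have heq : ‖x - P x‖ = ⨅ w : A, ‖x - w‖ :=
    le_antisymm (le_ciInf fun w => hmin w w.2) (ciInf_le hbdd ⟨P x, hPx⟩)
  exact (norm_eq_iInf_iff_real_inner_le_zero hA hPx).1 heq

lemma proj_firm {A : Set (Euc n)} {P : Euc n → Euc n}
    (hA : Convex ℝ A) (hP : IsProjection A P) (x : Euc n) {z : Euc n} (hz : z ∈ A) :
    ‖P x - z‖ ^ 2 + ‖x - P x‖ ^ 2 ≤ ‖x - z‖ ^ 2 := by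
  have h1 := proj_inner hA hP x z hz
  have hexp : ‖x - z‖ ^ 2 = ‖x - P x‖ ^ 2 + 2 * ⟪x - P x, P x - z⟫ + ‖P x - z‖ ^ 2 := by
    have := norm_add_sq_real (x - P x) (P x - z)
    rw [sub_add_sub_cancel] at this
    linarith
  have h2 : ⟪x - P x, P x - z⟫ = - ⟪x - P x, z - P x⟫ := by
    rw [← inner_neg_right, neg_sub]
  linarith

lemma proj_id {A : Set (Euc n)} {P : Euc n → Euc n}
    (hP : IsProjection A P) {a : Euc n} (ha : a ∈ A) : P a = a := by
  have h := (hP a).2 a ha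
  simp only [sub_self, norm_zero] at h
  have h' : ‖a - P a‖ = 0 := le_antisymm h (norm_nonneg _)
  rw [norm_eq_zero, sub_eq_zero] at h'
  exact h'.symm

lemma proj_unique {A : Set (Euc n)} {P : Euc n → Euc n}
    (hA : Convex ℝ A) (hP : IsProjection A P) {w q : Euc n} (hq : q ∈ A)
    (h : ∀ a ∈ A, ⟪w - q, a - q⟫ ≤ 0) : P w = q := by
  have h1 := proj_inner hA hP w q hq
  have h2 := h (P w) (hP w).1
  have hkey : ‖P w - q‖ ^ 2 ≤ 0 := by
    have e : (‖P w - q‖ : ℝ) ^ 2 = ⟪w - q, P w - q⟫ + ⟪w - P w, q - P w⟫ := by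
      rw [← real_inner_self_eq_norm_sq]
      have h3 : (P w - q : Euc n) = (w - q) - (w - P w) := by abel
      rw [h3, inner_sub_left]
      rw [show (q - P w : Euc n) = -((w - q) - (w - P w)) by abel, inner_neg_right]
      ring
    linarith
  have h4 : ‖P w - q‖ = 0 := by nlinarith [norm_nonneg (P w - q)]
  rw [norm_eq_zero, sub_eq_zero] at h4; exact h4

lemma key_span {u v e h : Euc n}
    (he : e ∈ Submodule.span ℝ ({u, v} : Set (Euc n)))
    (h1 : ⟪e, u⟫ = ‖u‖ ^ 2) (h2 : ⟪e, v⟫ = ‖v‖ ^ 2)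
    (huv : ⟪u, v⟫ ≤ 0)
    (hh1 : ‖u‖ ^ 2 ≤ ⟪h, u⟫) (hh2 : ‖v‖ ^ 2 ≤ ⟪h, v⟫) :
    ‖e‖ ^ 2 ≤ ⟪h, e⟫ := by
  obtain ⟨a, b, hab⟩ := Submodule.mem_span_pair.1 he
  set p : ℝ := ‖u‖ ^ 2 with hp
  set q : ℝ := ‖v‖ ^ 2 with hq
  set r : ℝ := ⟪u, v⟫ with hr
  have hp0 : 0 ≤ p := by positivity
  have hq0 : 0 ≤ q := by positivity
  have hcs : r ^ 2 ≤ p * q := by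
    have := abs_real_inner_le_norm u v
    have h' := abs_le.1 this
    nlinarith [h'.1, h'.2, norm_nonneg u, norm_nonneg v]
  have heu : a * p + b * r = p := by
    have : ⟪a • u + b • v, u⟫ = a * p + b * r := by
      rw [inner_add_left, real_inner_smul_left, real_inner_smul_left,
        real_inner_self_eq_norm_sq]
      rw [real_inner_comm u v]
    rw [hab] at this; rw [← this, h1]
  have hev : a * r + b * q = q := by
    have : ⟪a • u + b • v, v⟫ = a * r + b * q := by
      rw [inner_add_left, real_inner_smul_left, real_inner_smul_left,
        real_inner_self_eq_norm_sq]
    rw [hab] at this; rw [← this, h2]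
  have hee : ‖e‖ ^ 2 = a * p + b * q := by
    rw [← real_inner_self_eq_norm_sq, ← hab, inner_add_right, real_inner_smul_right,
      real_inner_smul_right, hab, h1, h2]
  have hhe : ⟪h, e⟫ = a * ⟪h, u⟫ + b * ⟪h, v⟫ := by
    rw [← hab, inner_add_right, real_inner_smul_right, real_inner_smul_right]
  rw [hee, hhe]
  by_cases hu0 : u = 0
  · have hpz : p = 0 := by simp [hp, hu0]
    have hrz : r = 0 := by simp [hr, hu0]
    have hu' : ⟪h, u⟫ = 0 := by simp [hu0]
    rw [hpz, hu']
    by_cases hv0 : v = 0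
    · have hqz : q = 0 := by simp [hq, hv0]
      have hv' : ⟪h, v⟫ = 0 := by simp [hv0]
      simp [hqz, hv']
    · have hqpos : 0 < q := by
        have : 0 < ‖v‖ := norm_pos_iff.2 hv0
        positivity
      have hb1 : b = 1 := by
        rw [hrz] at hev; field_simp at hev; nlinarith
      rw [hb1]; nlinarith
  by_cases hv0 : v = 0
  · have hqz : q = 0 := by simp [hq, hv0]
    have hrz : r = 0 := by simp [hr, hv0]
    have hv' : ⟪h, v⟫ = 0 := by simp [hv0]
    rw [hqz, hv']
    have hppos : 0 < p := by
      have : 0 < ‖u‖ := norm_pos_iff.2 hu0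
      positivity
    have ha1 : a = 1 := by rw [hrz] at heu; nlinarith
    rw [ha1]; nlinarith
  have hppos : 0 < p := by have : 0 < ‖u‖ := norm_pos_iff.2 hu0; positivity
  have hqpos : 0 < q := by have : 0 < ‖v‖ := norm_pos_iff.2 hv0; positivity
  have haD : a * (p * q - r * r) = q * (p - r) := by nlinarith [heu, hev]
  have hbD : b * (p * q - r * r) = p * (q - r) := by nlinarith [heu, hev]
  have hDpos : 0 < p * q - r * r := by
    rcases lt_or_eq_of_le (by nlinarith : r * r ≤ p * q) with h | h
    · linarith
    · exfalso
      have h0 : p * q - r * r = 0 := by linarith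
      rw [h0, mul_zero] at hbD
      nlinarith
  have ha : 0 ≤ a := by nlinarith
  have hb : 0 ≤ b := by nlinarith
  nlinarith [mul_nonneg ha (sub_nonneg.2 hh1), mul_nonneg hb (sub_nonneg.2 hh2)]

lemma equi_inner {w c p : Euc n} (h : ‖c - w‖ = ‖c - ((2:ℝ) • p - w)‖) :
    ⟪c - w, p - w⟫ = ‖p - w‖ ^ 2 := by
  have hrw : c - ((2:ℝ) • p - w) = (c - w) - (2:ℝ) • (p - w) := by module
  have hsq : ‖c - w‖ ^ 2 = ‖(c - w) - (2:ℝ) • (p - w)‖ ^ 2 := by rw [← hrw, ← h]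
  have hexp := norm_sub_sq_real (c - w) ((2:ℝ) • (p - w))
  rw [real_inner_smul_right, norm_smul] at hexp
  simp only [Real.norm_ofNat] at hexp
  nlinarith [hexp, hsq]

lemma circum_span {PA PB : Euc n → Euc n} {w c : Euc n}
    (h : c ∈ affineSpan ℝ ({w, reflect PA w, reflect PB w} : Set (Euc n))) :
    c - w ∈ Submodule.span ℝ ({PA w - w, PB w - w} : Set (Euc n)) := by
  have hw : w ∈ ({w, reflect PA w, reflect PB w} : Set (Euc n)) := by simp
  have hdir := AffineSubspace.vsub_mem_direction h (mem_affineSpan ℝ hw)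
  rw [direction_affineSpan, vectorSpan_eq_span_vsub_set_right ℝ hw] at hdir
  have himg : ((· -ᵥ w) '' ({w, reflect PA w, reflect PB w} : Set (Euc n)))
      = {0, reflect PA w - w, reflect PB w - w} := by
    simp [Set.image_insert_eq, vsub_eq_sub]
  rw [himg, Submodule.span_insert_zero] at hdir
  have hra : reflect PA w - w = (2:ℝ) • (PA w - w) := by
    simp only [reflect]; module
  have hrb : reflect PB w - w = (2:ℝ) • (PB w - w) := by
    simp only [reflect]; module
  rw [hra, hrb] at hdir
  obtain ⟨a, b, hab⟩ := Submodule.mem_span_pair.1 hdir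
  refine Submodule.mem_span_pair.2 ⟨a * 2, b * 2, ?_⟩
  rw [vsub_eq_sub] at hab
  rw [← hab, mul_smul, mul_smul]

set_option maxHeartbeats 1000000 in
lemma main_step {A B : Set (Euc n)} (hAcv : Convex ℝ A) (hBcv : Convex ℝ B)
    {PA PB : Euc n → Euc n} (hPA : IsProjection A PA) (hPB : IsProjection B PB)
    (x c : Euc n) (hc : IsCircumcenter PA PB (Zbar PA PB x) c)
    {z : Euc n} (hzA : z ∈ A) (hzB : z ∈ B) :
    ‖c - z‖ ^ 2 + ‖x - PB x‖ ^ 2 + ‖PB x - PA (PB x)‖ ^ 2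
      + (3/4) * ‖PA (PB x) - PB (PA (PB x))‖ ^ 2 + ‖c - Zbar PA PB x‖ ^ 2
      ≤ ‖x - z‖ ^ 2 := by
  have hyA : PA (PB x) ∈ A := (hPA (PB x)).1
  set y : Euc n := PA (PB x) with hydef
  have hqB : PB y ∈ B := (hPB y).1
  set q : Euc n := PB y with hqdef
  have hPAy : PA y = y := proj_id hPA hyA
  set w : Euc n := Zbar PA PB x with hwdef
  have hw : w = (2⁻¹:ℝ) • (y + q) := by
    rw [hwdef, Zbar, ← hydef, hPAy, ← hqdef]
  have hPBw : PB w = q := by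
    refine proj_unique hBcv hPB hqB fun b hb => ?_
    have hwq : w - q = (2⁻¹:ℝ) • (y - q) := by rw [hw]; module
    rw [hwq, real_inner_smul_left]
    have := proj_inner hBcv hPB y b hb
    rw [← hqdef] at this
    nlinarith
  set U : Euc n := PA w - w with hUdef
  set V : Euc n := q - w with hVdef
  have h_eu : ⟪c - w, U⟫ = ‖U‖ ^ 2 := by
    refine equi_inner ?_
    have h' := hc.2.1
    simp only [reflect] at h'
    exact h'
  have h_ev : ⟪c - w, V⟫ = ‖V‖ ^ 2 := by
    have h' : ⟪c - w, PB w - w⟫ = ‖PB w - w‖ ^ 2 := by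
      refine equi_inner ?_
      have h'' := hc.2.2
      simp only [reflect] at h''
      exact h''
    rwa [hPBw] at h'
  have hspan : c - w ∈ Submodule.span ℝ ({U, V} : Set (Euc n)) := by
    have h' := circum_span (w := w) (c := c) (PA := PA) (PB := PB) (by rw [hwdef]; exact hc.1)
    rwa [hPBw] at h'
  have hh1 : ‖U‖ ^ 2 ≤ ⟪z - w, U⟫ := by
    have h1 := proj_inner hAcv hPA w z hzA
    have e1 : w - PA w = -U := by rw [hUdef]; module
    have e2 : z - PA w = (z - w) - U := by rw [hUdef]; module
    rw [e1, e2, inner_neg_left, inner_sub_right, real_inner_self_eq_norm_sq] at h1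
    rw [real_inner_comm] at h1
    linarith
  have hh2 : ‖V‖ ^ 2 ≤ ⟪z - w, V⟫ := by
    have h1 := proj_inner hBcv hPB w z hzB
    rw [hPBw] at h1
    have e1 : w - q = -V := by rw [hVdef]; module
    have e2 : z - q = (z - w) - V := by rw [hVdef]; module
    rw [e1, e2, inner_neg_left, inner_sub_right, real_inner_self_eq_norm_sq] at h1
    rw [real_inner_comm] at h1
    linarith
  have huv : ⟪U, V⟫ ≤ 0 := by
    have h1 := proj_inner hAcv hPA w y hyA
    have e1 : w - PA w = -U := by rw [hUdef]; module
    have e2 : y - PA w = -V - U := by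
      rw [hUdef, hVdef, hw]; module
    rw [e1, e2, inner_neg_left, inner_sub_right, inner_neg_right,
      real_inner_self_eq_norm_sq] at h1
    nlinarith [sq_nonneg ‖U‖]
  have hkey : ‖c - w‖ ^ 2 ≤ ⟪z - w, c - w⟫ :=
    key_span hspan h_eu h_ev huv hh1 hh2
  have hcz : ‖c - z‖ ^ 2 + ‖c - w‖ ^ 2 ≤ ‖w - z‖ ^ 2 := by
    have e1 : c - z = (c - w) - (z - w) := by module
    have hexp := norm_sub_sq_real (c - w) (z - w)
    rw [← e1] at hexp
    have hzw : ‖z - w‖ = ‖w - z‖ := norm_sub_rev _ _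
    rw [real_inner_comm] at hkey
    rw [hzw] at hexp
    linarith
  have f1 : ‖PB x - z‖ ^ 2 + ‖x - PB x‖ ^ 2 ≤ ‖x - z‖ ^ 2 := proj_firm hBcv hPB x hzB
  have f2 : ‖y - z‖ ^ 2 + ‖PB x - y‖ ^ 2 ≤ ‖PB x - z‖ ^ 2 := by
    have := proj_firm hAcv hPA (PB x) hzA
    rwa [← hydef] at this
  have f3 : ‖q - z‖ ^ 2 + ‖y - q‖ ^ 2 ≤ ‖y - z‖ ^ 2 := by
    have := proj_firm hBcv hPB y hzB
    rwa [← hqdef] at this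
  have fmid : ‖w - z‖ ^ 2 =
      (1/2) * ‖y - z‖ ^ 2 + (1/2) * ‖q - z‖ ^ 2 - (1/4) * ‖y - q‖ ^ 2 := by
    have e1 : w - z = (2⁻¹:ℝ) • ((y - z) + (q - z)) := by rw [hw]; module
    have e2 : y - q = (y - z) - (q - z) := by module
    have hadd := norm_add_sq_real (y - z) (q - z)
    have hsub := norm_sub_sq_real (y - z) (q - z)
    rw [← e2] at hsub
    rw [e1, norm_smul]
    have h5 : ‖(2⁻¹:ℝ)‖ = 2⁻¹ := by norm_num
    rw [h5, mul_pow]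
    nlinarith [hadd, hsub]
  have hyq : ‖PA (PB x) - PB (PA (PB x))‖ = ‖y - q‖ := by rw [← hydef, ← hqdef]
  have hxw : ‖c - Zbar PA PB x‖ = ‖c - w‖ := by rw [← hwdef]
  rw [hyq, hxw]
  linarith [hcz, f1, f2, f3, fmid]

lemma norm_tendsto_zero_of_sq {v : ℕ → Euc n}
    (h : Tendsto (fun k => ‖v k‖ ^ 2) atTop (nhds 0)) :
    Tendsto (fun k => ‖v k‖) atTop (nhds 0) := by
  have h' : Tendsto (fun k => Real.sqrt (‖v k‖ ^ 2)) atTop (nhds (Real.sqrt 0)) := h.sqrt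
  simpa [Real.sqrt_sq (norm_nonneg _)] using h'

end Aux

set_option maxHeartbeats 1000000

/-- Global convergence of the successive cCRM with an almost cyclic control sequence:
the iterates converge to some point of `C = ∩ᵢ Cᵢ`. -/
theorem stmt7 {n m : ℕ} (C : Fin m → Set (Euc n))
    (hCcl : ∀ i, IsClosed (C i)) (hCcv : ∀ i, Convex ℝ (C i))
    (hne : (⋂ i, C i).Nonempty)
    (P : Fin m → Euc n → Euc n) (hP : ∀ i, IsProjection (C i) (P i))
    (ℓ r : ℕ → Fin m)
    (Q : ℕ) (hQm : m ≤ Q)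
    (hac : ∀ k : ℕ, ∀ i : Fin m, ∃ j : ℕ, k + 1 ≤ j ∧ j ≤ k + Q ∧ ℓ j = i)
    (x : ℕ → Euc n)
    (hx : ∀ k : ℕ,
      IsCircumcenter (P (ℓ k)) (P (r k)) (Zbar (P (ℓ k)) (P (r k)) (x k)) (x (k + 1))) :
    ∃ xstar ∈ ⋂ i, C i, Tendsto x atTop (nhds xstar) := by
  classical
  obtain ⟨z, hz⟩ := hne
  have hzi : ∀ i, z ∈ C i := fun i => Set.mem_iInter.1 hz i
  set y : ℕ → Euc n := fun k => P (ℓ k) (P (r k) (x k)) with hydef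
  set w : ℕ → Euc n := fun k => Zbar (P (ℓ k)) (P (r k)) (x k) with hwdef
  set q : ℕ → Euc n := fun k => P (r k) (y k) with hqdef
  have hM : ∀ (z' : Euc n), (∀ i, z' ∈ C i) → ∀ k,
      ‖x (k+1) - z'‖ ^ 2 + ‖x k - P (r k) (x k)‖ ^ 2 + ‖P (r k) (x k) - y k‖ ^ 2
        + (3/4) * ‖y k - q k‖ ^ 2 + ‖x (k+1) - w k‖ ^ 2 ≤ ‖x k - z'‖ ^ 2 := by
    intro z' hz' k
    exact main_step (hCcv (ℓ k)) (hCcv (r k)) (hP (ℓ k)) (hP (r k)) (x k) (x (k+1))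
      (hx k) (hz' (ℓ k)) (hz' (r k))
  have hmono : ∀ (z' : Euc n), (∀ i, z' ∈ C i) → ∀ k, ‖x (k+1) - z'‖ ≤ ‖x k - z'‖ := by
    intro z' hz' k
    have h := hM z' hz' k
    have h1 : ‖x (k+1) - z'‖ ^ 2 ≤ ‖x k - z'‖ ^ 2 := by
      nlinarith [sq_nonneg ‖x k - P (r k) (x k)‖, sq_nonneg ‖P (r k) (x k) - y k‖,
        sq_nonneg ‖y k - q k‖, sq_nonneg ‖x (k+1) - w k‖]
    nlinarith [norm_nonneg (x (k+1) - z'), norm_nonneg (x k - z')]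
  -- limits of gap terms
  have hbdd : BddBelow (Set.range fun k => ‖x k - z‖ ^ 2) := by
    refine ⟨0, ?_⟩; rintro s ⟨k, rfl⟩; positivity
  have hanti : Antitone fun k => ‖x k - z‖ ^ 2 := by
    refine antitone_nat_of_succ_le fun k => ?_
    have := hmono z hzi k
    nlinarith [norm_nonneg (x (k+1) - z), norm_nonneg (x k - z)]
  have hD2 : Tendsto (fun k => ‖x k - z‖ ^ 2) atTop (nhds (⨅ k, ‖x k - z‖ ^ 2)) :=
    tendsto_atTop_ciInf hanti hbdd
  have hdiff : Tendsto (fun k => ‖x k - z‖ ^ 2 - ‖x (k+1) - z‖ ^ 2) atTop (nhds 0) := by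
    have h2 : Tendsto (fun k => ‖x (k+1) - z‖ ^ 2) atTop (nhds (⨅ k, ‖x k - z‖ ^ 2)) :=
      hD2.comp (tendsto_add_atTop_nat 1)
    simpa using hD2.sub h2
  have hsqz : ∀ g : ℕ → ℝ, (∀ k, 0 ≤ g k) →
      (∀ k, g k ≤ ‖x k - z‖ ^ 2 - ‖x (k+1) - z‖ ^ 2) → Tendsto g atTop (nhds 0) :=
    fun g h0 hle => squeeze_zero h0 hle hdiff
  have t1 : Tendsto (fun k => ‖x k - P (r k) (x k)‖) atTop (nhds 0) := by
    refine norm_tendsto_zero_of_sq (hsqz _ (fun k => by positivity) (fun k => ?_))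
    have h := hM z hzi k
    nlinarith [sq_nonneg ‖P (r k) (x k) - y k‖, sq_nonneg ‖y k - q k‖,
      sq_nonneg ‖x (k+1) - w k‖]
  have t2 : Tendsto (fun k => ‖P (r k) (x k) - y k‖) atTop (nhds 0) := by
    refine norm_tendsto_zero_of_sq (hsqz _ (fun k => by positivity) (fun k => ?_))
    have h := hM z hzi k
    nlinarith [sq_nonneg ‖x k - P (r k) (x k)‖, sq_nonneg ‖y k - q k‖,
      sq_nonneg ‖x (k+1) - w k‖]
  have t4 : Tendsto (fun k => ‖x (k+1) - w k‖) atTop (nhds 0) := by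
    refine norm_tendsto_zero_of_sq (hsqz _ (fun k => by positivity) (fun k => ?_))
    have h := hM z hzi k
    nlinarith [sq_nonneg ‖x k - P (r k) (x k)‖, sq_nonneg ‖y k - q k‖,
      sq_nonneg ‖P (r k) (x k) - y k‖]
  have t3 : Tendsto (fun k => ‖y k - q k‖) atTop (nhds 0) := by
    refine norm_tendsto_zero_of_sq ?_
    have t3sq : Tendsto (fun k => (3/4) * ‖y k - q k‖ ^ 2) atTop (nhds 0) := by
      refine hsqz _ (fun k => by positivity) (fun k => ?_)
      have h := hM z hzi k
      nlinarith [sq_nonneg ‖x k - P (r k) (x k)‖, sq_nonneg ‖x (k+1) - w k‖,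
        sq_nonneg ‖P (r k) (x k) - y k‖]
    have h' := t3sq.const_mul (4/3 : ℝ)
    have hfe : (fun k => (4/3 : ℝ) * ((3/4) * ‖y k - q k‖ ^ 2))
        = fun k => ‖y k - q k‖ ^ 2 := by
      funext k; ring
    rw [hfe] at h'
    simpa using h'
  have txy : Tendsto (fun k => ‖x k - y k‖) atTop (nhds 0) := by
    refine squeeze_zero (fun k => norm_nonneg _) (fun k => ?_) (by simpa using t1.add t2)
    have h := dist_triangle (x k) (P (r k) (x k)) (y k)
    simpa [dist_eq_norm] using h
  have hwy : ∀ k, w k - y k = (2⁻¹:ℝ) • (q k - y k) := by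
    intro k
    have hyA : P (ℓ k) (P (r k) (x k)) ∈ C (ℓ k) := (hP (ℓ k) _).1
    have hPAy : P (ℓ k) (P (ℓ k) (P (r k) (x k))) = P (ℓ k) (P (r k) (x k)) :=
      proj_id (hP (ℓ k)) hyA
    simp only [hwdef, hydef, hqdef, Zbar, hPAy]
    module
  have twy : Tendsto (fun k => ‖w k - y k‖) atTop (nhds 0) := by
    have hfe : (fun k => ‖w k - y k‖) = fun k => 2⁻¹ * ‖y k - q k‖ := by
      funext k
      rw [hwy k, norm_smul, norm_sub_rev (q k) (y k)]
      norm_num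
    rw [hfe]
    simpa using t3.const_mul (2⁻¹ : ℝ)
  have tstep : Tendsto (fun k => ‖x (k+1) - x k‖) atTop (nhds 0) := by
    refine squeeze_zero (fun k => norm_nonneg _) (fun k => ?_)
      (by simpa using (t4.add twy).add txy)
    have h := dist_triangle4 (x (k+1)) (w k) (y k) (x k)
    rw [dist_comm (y k) (x k)] at h
    simpa [dist_eq_norm] using h
  -- feasibility in the limit
  have hfeas : ∀ i, Tendsto (fun k => infDist (x k) (C i)) atTop (nhds 0) := by
    intro i
    rw [Metric.tendsto_atTop]
    intro ε hε
    have hε2 : 0 < ε / 2 := by linarith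
    have hεQ : 0 < ε / (2 * (Q + 1)) := by positivity
    obtain ⟨N1, hN1⟩ := (Metric.tendsto_atTop.1 txy) (ε/2) hε2
    obtain ⟨N2, hN2⟩ := (Metric.tendsto_atTop.1 tstep) (ε / (2 * (Q+1))) hεQ
    refine ⟨max N1 N2, fun k hk => ?_⟩
    obtain ⟨j, hj1, hj2, hji⟩ := hac k i
    have hyCj : y j ∈ C i := by rw [← hji]; exact (hP (ℓ j) _).1
    have hkj : k ≤ j := le_trans (Nat.le_succ k) hj1
    have hd1 : dist (x k) (x j) ≤ (↑(j - k)) * (ε / (2*(Q+1))) := by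
      have h := dist_le_Ico_sum_dist x hkj
      refine le_trans h ?_
      have hb : ∀ t ∈ Finset.Ico k j, dist (x t) (x (t+1)) ≤ ε / (2*(Q+1)) := by
        intro t ht
        have htk : N2 ≤ t := le_trans (le_trans (le_max_right N1 N2) hk)
          (Finset.mem_Ico.1 ht).1
        have := hN2 t htk
        rw [Real.dist_eq, sub_zero, abs_of_nonneg (norm_nonneg _)] at this
        rw [dist_comm, dist_eq_norm]
        exact le_of_lt this
      have hsum := Finset.sum_le_card_nsmul (Finset.Ico k j) _ _ hb
      rwa [Nat.card_Ico, nsmul_eq_mul] at hsum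
    have hjk : ((j - k : ℕ) : ℝ) ≤ (Q : ℝ) := by
      have : j - k ≤ Q := by omega
      exact_mod_cast this
    have hQlt : (↑(j - k)) * (ε / (2*(Q+1))) < ε / 2 := by
      have hle : (↑(j - k)) * (ε / (2*(Q+1))) ≤ (Q:ℝ) * (ε / (2 * (Q + 1))) :=
        mul_le_mul_of_nonneg_right hjk (le_of_lt hεQ)
      have h3 : (Q:ℝ) * (ε / (2 * (Q+1))) = (Q * ε) / (2 * (Q+1)) := by ring
      have h4 : ((Q:ℝ) * ε) / (2 * (Q+1)) < ε / 2 := by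
        rw [div_lt_div_iff₀ (by positivity) (by norm_num)]
        nlinarith [hε]
      linarith [hle, h3 ▸ h4]
    have hd2 : dist (x j) (y j) < ε / 2 := by
      have := hN1 j (le_trans (le_trans (le_max_left N1 N2) hk) hkj)
      rw [Real.dist_eq, sub_zero, abs_of_nonneg (norm_nonneg _)] at this
      rwa [dist_eq_norm]
    have hid : infDist (x k) (C i) ≤ dist (x k) (y j) := infDist_le_dist_of_mem hyCj
    have htri : dist (x k) (y j) ≤ dist (x k) (x j) + dist (x j) (y j) := dist_triangle _ _ _
    rw [Real.dist_eq, sub_zero, abs_of_nonneg (infDist_nonneg)]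
    linarith
  -- bounded, extract convergent subsequence
  have hb0 : ∀ k, ‖x k - z‖ ≤ ‖x 0 - z‖ := by
    intro k
    induction k with
    | zero => exact le_refl _
    | succ k ih => exact le_trans (hmono z hzi k) ih
  have hball : ∀ k, x k ∈ closedBall z ‖x 0 - z‖ := by
    intro k
    rw [mem_closedBall, dist_eq_norm]
    exact hb0 k
  obtain ⟨a, -, φ, hφ, hlim⟩ :=
    tendsto_subseq_of_bounded (isBounded_closedBall (x := z) (r := ‖x 0 - z‖)) hball
  have haC : ∀ i, a ∈ C i := by
    intro i
    have h1 : Tendsto (fun t => infDist (x (φ t)) (C i)) atTop (nhds (infDist a (C i))) :=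
      ((continuous_infDist_pt (C i)).tendsto a).comp hlim
    have h2 : Tendsto (fun t => infDist (x (φ t)) (C i)) atTop (nhds 0) :=
      (hfeas i).comp hφ.tendsto_atTop
    have h0 : infDist a (C i) = 0 := tendsto_nhds_unique h1 h2
    exact ((hCcl i).mem_iff_infDist_zero ⟨z, hzi i⟩).2 h0
  have hanti2 : Antitone fun k => ‖x k - a‖ := antitone_nat_of_succ_le (hmono a haC)
  have hbdd2 : BddBelow (Set.range fun k => ‖x k - a‖) := by
    refine ⟨0, ?_⟩; rintro s ⟨k, rfl⟩; exact norm_nonneg _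
  have hT : Tendsto (fun k => ‖x k - a‖) atTop (nhds (⨅ k, ‖x k - a‖)) :=
    tendsto_atTop_ciInf hanti2 hbdd2
  have hsub : Tendsto (fun t => ‖x (φ t) - a‖) atTop (nhds (⨅ k, ‖x k - a‖)) :=
    hT.comp hφ.tendsto_atTop
  have hsub0 : Tendsto (fun t => ‖x (φ t) - a‖) atTop (nhds 0) := by
    have h := tendsto_iff_dist_tendsto_zero.1 hlim
    simpa [Function.comp, dist_eq_norm] using h
  have hinf0 : (⨅ k, ‖x k - a‖) = 0 := tendsto_nhds_unique hsub hsub0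
  refine ⟨a, Set.mem_iInter.2 haC, ?_⟩
  rw [tendsto_iff_dist_tendsto_zero]
  rw [hinf0] at hT
  simpa [dist_eq_norm] using hT
end
end

section
/- For i = 1, …, m let f_i : ℝⁿ → ℝ be convex and C_i := {x ∈ ℝⁿ : f_i(x) ≤ 0}, with C := ∩_{i=1}^m C_i ≠ ∅. Let ℓ(k), r(k) ∈ {1, …, m} be given by the most violated constraint control in function value version: for every k and every i ∈ {1, …, m}, f_{ℓ(k)}(x^k) ≥ f_i(x^k) and f_{r(k)}(P_{C_{ℓ(k)}}(x^k)) ≥ f_i(P_{C_{ℓ(k)}}(x^k)). Let {x^k} be generated from any x^0 ∈ ℝⁿ by x^{k+1} := T_{C_{ℓ(k)}, C_{r(k)}}(x^k). Then there exists x* ∈ C such that x^k → x*. -/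
/-!
For `z ∈ A ∩ B` one cCRM step satisfies `‖T x - z‖² + ‖x - P_A P_B x‖² / 2 ≤ ‖x - z‖²`. The point
`w = Z̄ x` is the midpoint of `y = P_A P_B x ∈ A` and `P_B y`, which makes the angle between the
steps `P_A w - w` and `P_B w - w` obtuse; then the circumcenter `c` is a nonnegative combination of
the two steps, while `z` lies beyond both bisector hyperplanes, so `⟪z - c, c - w⟫ ≥ 0` and `c` is
closer to `z` than `w`. Projections bring `w` closer to `z` than `x`.

Hence the iterates are Fejér monotone and `x^k - P_ℓ P_r x^k → 0`. Along a subsequence on which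
`ℓ(k) = i₀` is constant, a cluster point `p` lies in `C_{i₀}`, and the most violated control gives
`f_i p ≤ f_{i₀} p ≤ 0`, so `p ∈ C`; Fejér monotonicity turns this into convergence of the sequence.
-/

noncomputable section

open Filter Metric RealInnerProductSpace

open Topology

section Fejer

variable {X : Type*} [PseudoMetricSpace X]

theorem tendsto_of_antitone_dist_of_subseq {x : ℕ → X} {p : X} {φ : ℕ → ℕ}
    (hanti : Antitone fun k => dist (x k) p)
    (hxφ : Tendsto (x ∘ φ) atTop (𝓝 p)) : Tendsto x atTop (𝓝 p) := by
  rw [Metric.tendsto_atTop] at hxφ ⊢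
  intro ε hε
  obtain ⟨j, hj⟩ := hxφ ε hε
  exact ⟨φ j, fun k hk => (hanti hk).trans_lt (hj j le_rfl)⟩

theorem exists_tendsto_of_fejer [ProperSpace X] {x : ℕ → X} {S : Set X} (hS : S.Nonempty)
    (hfejer : ∀ z ∈ S, ∀ k, dist (x (k + 1)) z ≤ dist (x k) z)
    (hclust : ∀ p (φ : ℕ → ℕ), StrictMono φ → Tendsto (x ∘ φ) atTop (𝓝 p) → p ∈ S) :
    ∃ p ∈ S, Tendsto x atTop (𝓝 p) := by
  have hanti : ∀ z ∈ S, Antitone fun k => dist (x k) z := fun z hz =>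
    antitone_nat_of_succ_le (hfejer z hz)
  obtain ⟨z, hz⟩ := hS
  obtain ⟨p, -, φ, hφ, hxφ⟩ := tendsto_subseq_of_bounded isBounded_closedBall
    fun k => mem_closedBall.2 (hanti z hz (Nat.zero_le k))
  have hp := hclust p φ hφ hxφ
  exact ⟨p, hp, tendsto_of_antitone_dist_of_subseq (hanti p hp) hxφ⟩

end Fejer

theorem tendsto_zero_of_add_le {a r : ℕ → ℝ} (ha : ∀ k, 0 ≤ a k) (hr : ∀ k, 0 ≤ r k)
    (h : ∀ k, a (k + 1) + r k ≤ a k) : Tendsto r atTop (𝓝 0) := by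
  have hsum : ∀ n, ∑ i ∈ Finset.range n, r i ≤ a 0 - a n := by
    intro n
    induction n with
    | zero => simp
    | succ n ih => rw [Finset.sum_range_succ]; linarith [h n]
  exact (summable_of_sum_range_le hr fun n =>
    (hsum n).trans (sub_le_self _ (ha n))).tendsto_atTop_zero

theorem le_zero_of_tendsto_subseq_of_most_violated {X ι : Type*} [PseudoMetricSpace X]
    [Finite ι] {f : ι → X → ℝ} (hf : ∀ i, Continuous (f i)) {ℓ : ℕ → ι} {x y : ℕ → X}
    (hℓ : ∀ k i, f i (x k) ≤ f (ℓ k) (x k)) (hy : ∀ k, f (ℓ k) (y k) ≤ 0)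
    (hxy : Tendsto (fun k => dist (x k) (y k)) atTop (𝓝 0)) {p : X} {φ : ℕ → ℕ}
    (hφ : StrictMono φ) (hxφ : Tendsto (x ∘ φ) atTop (𝓝 p)) (i : ι) : f i p ≤ 0 := by
  obtain ⟨i₀, hi₀⟩ : ∃ i₀, ∃ᶠ j in atTop, ℓ (φ j) = i₀ := by
    by_contra! h
    obtain ⟨j, hj⟩ := (eventually_all.2 h).exists
    exact hj _ rfl
  obtain ⟨ψ, hψ, hψi₀⟩ := extraction_of_frequently_atTop hi₀
  have hxσ : Tendsto (x ∘ φ ∘ ψ) atTop (𝓝 p) := hxφ.comp hψ.tendsto_atTop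
  have hyσ : Tendsto (y ∘ φ ∘ ψ) atTop (𝓝 p) :=
    hxσ.congr_dist (hxy.comp (hφ.comp hψ).tendsto_atTop)
  have hfi₀ : f i₀ p ≤ 0 := le_of_tendsto' (((hf i₀).tendsto p).comp hyσ) fun j => by
    simpa [hψi₀ j] using hy (φ (ψ j))
  have hfi : f i p ≤ f i₀ p :=
    le_of_tendsto_of_tendsto' (((hf i).tendsto p).comp hxσ) (((hf i₀).tendsto p).comp hxσ)
      fun j => by simpa [hψi₀ j] using hℓ (φ (ψ j)) i
  exact hfi.trans hfi₀

section InnerProduct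

variable {E : Type*} [NormedAddCommGroup E] [InnerProductSpace ℝ E]

theorem inner_eq_inner_self_of_norm_eq_norm_sub_two_smul {p u : E}
    (h : ‖p‖ = ‖p - (2 : ℝ) • u‖) : ⟪p, u⟫ = ⟪u, u⟫ := by
  have h2 := congrArg (· ^ 2) h
  simp only [norm_sub_sq_real, norm_smul, real_inner_smul_right, Real.norm_ofNat] at h2
  rw [real_inner_self_eq_norm_sq]
  linarith

theorem exists_nonneg_smul_add_smul_eq {u v p : E} (hp : p ∈ Submodule.span ℝ {u, v})
    (hpu : ⟪p, u⟫ = ⟪u, u⟫) (hpv : ⟪p, v⟫ = ⟪v, v⟫) (huv : ⟪u, v⟫ ≤ -⟪u, u⟫) :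
    ∃ a b : ℝ, 0 ≤ a ∧ 0 ≤ b ∧ a • u + b • v = p := by
  obtain ⟨a, b, rfl⟩ := Submodule.mem_span_pair.1 hp
  simp only [inner_add_left, real_inner_smul_left, real_inner_comm u v] at hpu hpv
  rcases eq_or_ne u 0 with rfl | hu
  · rcases eq_or_ne v 0 with rfl | hv
    · exact ⟨0, 0, le_rfl, le_rfl, by simp⟩
    · have hb : b = 1 := by simpa [hv] using hpv
      exact ⟨0, 1, le_rfl, zero_le_one, by simp [hb]⟩
  · have he : 0 < ⟪u, u⟫ := real_inner_self_pos.2 hu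
    have hg : 0 ≤ ⟪v, v⟫ := real_inner_self_nonneg
    have hD : 0 < ⟪u, u⟫ * ⟪v, v⟫ - ⟪u, v⟫ * ⟪u, v⟫ := by
      refine sub_pos.2 ((real_inner_mul_inner_self_le u v).lt_of_ne fun hD => ?_)
      -- equality in Cauchy–Schwarz would force `⟪v, v⟫ = ⟪u, v⟫ < 0`
      have : ⟪u, u⟫ * (⟪v, v⟫ - ⟪u, v⟫) = 0 := by
        linear_combination ⟪u, v⟫ * hpu - ⟪u, u⟫ * hpv - b * hD
      nlinarith
    -- Cramer's rule for the Gram system of `u, v`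
    have ha : a * (⟪u, u⟫ * ⟪v, v⟫ - ⟪u, v⟫ * ⟪u, v⟫) = ⟪v, v⟫ * (⟪u, u⟫ - ⟪u, v⟫) := by
      linear_combination ⟪v, v⟫ * hpu - ⟪u, v⟫ * hpv
    have hb : b * (⟪u, u⟫ * ⟪v, v⟫ - ⟪u, v⟫ * ⟪u, v⟫) = ⟪u, u⟫ * (⟪v, v⟫ - ⟪u, v⟫) := by
      linear_combination ⟪u, u⟫ * hpv - ⟪u, v⟫ * hpu
    refine ⟨a, b, ?_, ?_, rfl⟩
    · exact nonneg_of_mul_nonneg_left (ha ▸ mul_nonneg hg (by linarith)) hD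
    · exact nonneg_of_mul_nonneg_left (hb ▸ mul_nonneg he.le (by linarith)) hD

end InnerProduct

namespace IsProjection

variable {n : ℕ} {A : Set (Euc n)} {P : Euc n → Euc n}

theorem inner_sub_nonpos (hP : IsProjection A P) (hA : Convex ℝ A) (x : Euc n) {a : Euc n}
    (ha : a ∈ A) : ⟪x - P x, a - P x⟫ ≤ 0 := by
  refine (norm_eq_iInf_iff_real_inner_le_zero hA (hP x).1).1 ?_ a ha
  have : Nonempty A := ⟨⟨a, ha⟩⟩
  refine le_antisymm (le_ciInf fun b => (hP x).2 b b.2) ?_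
  exact ciInf_le ⟨0, by rintro _ ⟨b, rfl⟩; positivity⟩ (⟨P x, (hP x).1⟩ : A)

theorem apply_eq_self (hP : IsProjection A P) {x : Euc n} (hx : x ∈ A) : P x = x := by
  have h := (hP x).2 x hx
  rwa [sub_self, norm_zero, norm_le_zero_iff, sub_eq_zero, eq_comm] at h

theorem eq_of_inner_sub_nonpos (hP : IsProjection A P) (hA : Convex ℝ A) {x b : Euc n}
    (hb : b ∈ A) (h : ∀ a ∈ A, ⟪x - b, a - b⟫ ≤ 0) : P x = b := by
  have h₁ := hP.inner_sub_nonpos hA x hb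
  have h₂ : ⟪x - b, P x - b⟫ = -⟪x - b, b - P x⟫ := by rw [← inner_neg_right, neg_sub]
  have key : ⟪b - P x, b - P x⟫ ≤ 0 := by
    have e : b - P x = (x - P x) - (x - b) := by abel
    nth_rewrite 1 [e]
    rw [inner_sub_left]
    linarith [h _ (hP x).1]
  exact (sub_eq_zero.1 (real_inner_self_nonpos.1 key)).symm

theorem norm_sub_sq_add_norm_sub_sq_le (hP : IsProjection A P) (hA : Convex ℝ A) (x : Euc n)
    {z : Euc n} (hz : z ∈ A) : ‖P x - z‖ ^ 2 + ‖x - P x‖ ^ 2 ≤ ‖x - z‖ ^ 2 := by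
  have h := hP.inner_sub_nonpos hA x hz
  have e : x - z = (x - P x) - (z - P x) := by abel
  rw [e, norm_sub_sq_real (x - P x), norm_sub_rev (P x)]
  linarith

theorem norm_apply_sub_le (hP : IsProjection A P) (hA : Convex ℝ A) (x : Euc n) {z : Euc n}
    (hz : z ∈ A) : ‖P x - z‖ ≤ ‖x - z‖ :=
  (pow_le_pow_iff_left₀ (norm_nonneg _) (norm_nonneg _) two_ne_zero).1 <| by
    linarith [hP.norm_sub_sq_add_norm_sub_sq_le hA x hz, sq_nonneg ‖x - P x‖]

theorem apply_midpoint (hP : IsProjection A P) (hA : Convex ℝ A) (y : Euc n) :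
    P ((2⁻¹ : ℝ) • (y + P y)) = P y := by
  refine hP.eq_of_inner_sub_nonpos hA (hP y).1 fun a ha => ?_
  have e : (2⁻¹ : ℝ) • (y + P y) - P y = (2⁻¹ : ℝ) • (y - P y) := by module
  rw [e, real_inner_smul_left]
  exact mul_nonpos_of_nonneg_of_nonpos (by norm_num) (hP.inner_sub_nonpos hA y ha)

end IsProjection

namespace IsCircumcenter

variable {n : ℕ} {PA PB : Euc n → Euc n} {w c : Euc n}

theorem sub_mem_span (hc : IsCircumcenter PA PB w c) :
    c - w ∈ Submodule.span ℝ {PA w - w, PB w - w} := by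
  have hw : w ∈ ({w, reflect PA w, reflect PB w} : Set (Euc n)) := Set.mem_insert _ _
  have h := AffineSubspace.vsub_mem_direction hc.1 (mem_affineSpan ℝ hw)
  rw [direction_affineSpan, vectorSpan_eq_span_vsub_set_right ℝ hw] at h
  have himg : (· -ᵥ w) '' ({w, reflect PA w, reflect PB w} : Set (Euc n)) =
      {0, (2 : ℝ) • (PA w - w), (2 : ℝ) • (PB w - w)} := by
    have e (P : Euc n → Euc n) : reflect P w - w = (2 : ℝ) • (P w - w) := by
      rw [reflect]; module
    simp only [Set.image_insert_eq, Set.image_singleton, vsub_eq_sub, sub_self, e]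
  rw [himg, Submodule.span_insert_zero, Submodule.mem_span_pair] at h
  obtain ⟨a, b, hab⟩ := h
  rw [vsub_eq_sub] at hab
  rw [← hab, smul_smul, smul_smul]
  exact Submodule.mem_span_pair.2 ⟨_, _, rfl⟩

theorem inner_sub_eq_left (hc : IsCircumcenter PA PB w c) :
    ⟪c - w, PA w - w⟫ = ⟪PA w - w, PA w - w⟫ :=
  inner_eq_inner_self_of_norm_eq_norm_sub_two_smul <| hc.2.1.trans <| by
    rw [reflect]; congr 1; module

theorem inner_sub_eq_right (hc : IsCircumcenter PA PB w c) :
    ⟪c - w, PB w - w⟫ = ⟪PB w - w, PB w - w⟫ :=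
  inner_eq_inner_self_of_norm_eq_norm_sub_two_smul <| hc.2.2.trans <| by
    rw [reflect]; congr 1; module

theorem norm_sub_le {A B : Set (Euc n)} (hA : Convex ℝ A) (hB : Convex ℝ B)
    (hPA : IsProjection A PA) (hPB : IsProjection B PB) (hc : IsCircumcenter PA PB w c)
    (hobtuse : ⟪PA w - w, PB w - w⟫ ≤ -⟪PA w - w, PA w - w⟫) {z : Euc n} (hzA : z ∈ A)
    (hzB : z ∈ B) : ‖c - z‖ ≤ ‖w - z‖ := by
  -- `z` lies in the half-spaces cut out by the two bisector hyperplanes through `c`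
  have half {P : Euc n → Euc n} {S : Set (Euc n)} (hS : Convex ℝ S) (hP : IsProjection S P)
      (hz : z ∈ S) (hcP : ⟪c - w, P w - w⟫ = ⟪P w - w, P w - w⟫) : 0 ≤ ⟪z - c, P w - w⟫ := by
    have h := hP.inner_sub_nonpos hS w hz
    have e₁ : w - P w = -(P w - w) := (neg_sub _ _).symm
    have e₂ : z - P w = (z - w) - (P w - w) := by abel
    have e₃ : z - c = (z - w) - (c - w) := by abel
    rw [e₁, e₂, inner_neg_left, inner_sub_right, real_inner_comm] at h
    rw [e₃, inner_sub_left, hcP]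
    linarith
  obtain ⟨a, b, ha, hb, hab⟩ := exists_nonneg_smul_add_smul_eq hc.sub_mem_span
    hc.inner_sub_eq_left hc.inner_sub_eq_right hobtuse
  have key : 0 ≤ ⟪z - c, c - w⟫ := by
    rw [← hab, inner_add_right, real_inner_smul_right, real_inner_smul_right]
    have := half hA hPA hzA hc.inner_sub_eq_left
    have := half hB hPB hzB hc.inner_sub_eq_right
    positivity
  have e : w - z = -((z - c) + (c - w)) := by abel
  refine (pow_le_pow_iff_left₀ (norm_nonneg _) (norm_nonneg _) two_ne_zero).1 ?_
  rw [e, norm_neg, norm_add_sq_real, ← norm_neg (z - c), neg_sub]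
  nlinarith [sq_nonneg ‖c - w‖]

end IsCircumcenter

section Zbar

variable {n : ℕ} {A B : Set (Euc n)} {PA PB : Euc n → Euc n}

theorem Zbar_eq (hPA : IsProjection A PA) (x : Euc n) :
    Zbar PA PB x = (2⁻¹ : ℝ) • (PA (PB x) + PB (PA (PB x))) := by
  rw [Zbar, hPA.apply_eq_self (hPA _).1]

theorem inner_sub_Zbar_le (hA : Convex ℝ A) (hB : Convex ℝ B) (hPA : IsProjection A PA)
    (hPB : IsProjection B PB) (x : Euc n) :
    ⟪PA (Zbar PA PB x) - Zbar PA PB x, PB (Zbar PA PB x) - Zbar PA PB x⟫ ≤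
      -⟪PA (Zbar PA PB x) - Zbar PA PB x, PA (Zbar PA PB x) - Zbar PA PB x⟫ := by
  set y := PA (PB x)
  rw [Zbar_eq hPA, hPB.apply_midpoint hB]
  set w := (2⁻¹ : ℝ) • (y + PB y)
  have h := hPA.inner_sub_nonpos hA w (hPA (PB x)).1
  have e₁ : w - PA w = -(PA w - w) := (neg_sub _ _).symm
  have e₂ : y - PA w = -(PB y - w) - (PA w - w) := by simp only [w]; module
  rw [e₁, e₂, inner_neg_left, inner_sub_right, inner_neg_right] at h
  linarith

theorem norm_Zbar_sub_le (hB : Convex ℝ B) (hPA : IsProjection A PA) (hPB : IsProjection B PB)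
    (x : Euc n) {z : Euc n} (hz : z ∈ B) : ‖Zbar PA PB x - z‖ ≤ ‖PA (PB x) - z‖ := by
  set y := PA (PB x)
  have hy : ‖PB y - z‖ ≤ ‖y - z‖ := hPB.norm_apply_sub_le hB y hz
  have e : (2⁻¹ : ℝ) • (y + PB y) - z = (2⁻¹ : ℝ) • ((y - z) + (PB y - z)) := by module
  calc ‖Zbar PA PB x - z‖ = 2⁻¹ * ‖(y - z) + (PB y - z)‖ := by
        rw [Zbar_eq hPA, e, norm_smul, Real.norm_of_nonneg (by norm_num)]
    _ ≤ 2⁻¹ * (‖y - z‖ + ‖PB y - z‖) := by gcongr; exact norm_add_le _ _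
    _ ≤ ‖y - z‖ := by linarith

theorem IsCircumcenter.norm_sub_sq_add_le_of_Zbar (hA : Convex ℝ A) (hB : Convex ℝ B)
    (hPA : IsProjection A PA) (hPB : IsProjection B PB) {x c : Euc n}
    (hc : IsCircumcenter PA PB (Zbar PA PB x) c) {z : Euc n} (hzA : z ∈ A) (hzB : z ∈ B) :
    ‖c - z‖ ^ 2 + ‖x - PA (PB x)‖ ^ 2 / 2 ≤ ‖x - z‖ ^ 2 := by
  have hcw := hc.norm_sub_le hA hB hPA hPB (inner_sub_Zbar_le hA hB hPA hPB x) hzA hzB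
  have hwy := norm_Zbar_sub_le hB hPA hPB x hzB
  have h₁ := hPB.norm_sub_sq_add_norm_sub_sq_le hB x hzB
  have h₂ := hPA.norm_sub_sq_add_norm_sub_sq_le hA (PB x) hzA
  have htri := norm_sub_le_norm_sub_add_norm_sub x (PB x) (PA (PB x))
  have hcy : ‖c - z‖ ^ 2 ≤ ‖PA (PB x) - z‖ ^ 2 := by gcongr; exact hcw.trans hwy
  nlinarith [sq_nonneg (‖x - PB x‖ - ‖PB x - PA (PB x)‖), norm_nonneg (x - PA (PB x))]

end Zbar

theorem stmt9_general {n m : ℕ} (f : Fin m → Euc n → ℝ)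
    (hf : ∀ i, ConvexOn ℝ Set.univ (f i))
    (C : Fin m → Set (Euc n)) (hC : ∀ i, C i = {x | f i x ≤ 0})
    (hne : (⋂ i, C i).Nonempty)
    (P : Fin m → Euc n → Euc n) (hP : ∀ i, IsProjection (C i) (P i))
    (ℓ r : ℕ → Fin m) (x : ℕ → Euc n)
    (hℓ : ∀ k : ℕ, ∀ i : Fin m, f i (x k) ≤ f (ℓ k) (x k))
    (hx : ∀ k : ℕ,
      IsCircumcenter (P (ℓ k)) (P (r k)) (Zbar (P (ℓ k)) (P (r k)) (x k)) (x (k + 1))) :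
    ∃ xstar ∈ ⋂ i, C i, Tendsto x atTop (nhds xstar) := by
  have hcont : ∀ i, Continuous (f i) := fun i => (hf i).locallyLipschitz.continuous
  have hconv : ∀ i, Convex ℝ (C i) := fun i => by simpa [hC i] using (hf i).convex_le 0
  set y : ℕ → Euc n := fun k => P (ℓ k) (P (r k) (x k))
  have hstep : ∀ k, ∀ z ∈ ⋂ i, C i, ‖x (k + 1) - z‖ ^ 2 + ‖x k - y k‖ ^ 2 / 2 ≤ ‖x k - z‖ ^ 2 :=
    fun k z hz => (hx k).norm_sub_sq_add_le_of_Zbar (hconv _) (hconv _) (hP _) (hP _)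
      (Set.mem_iInter.1 hz _) (Set.mem_iInter.1 hz _)
  have hres : Tendsto (fun k => dist (x k) (y k)) atTop (𝓝 0) := by
    obtain ⟨z, hz⟩ := hne
    have h := (tendsto_zero_of_add_le (fun k => sq_nonneg ‖x k - z‖) (fun k => by positivity)
      fun k => hstep k z hz).const_mul 2 |>.sqrt
    simpa [dist_eq_norm, mul_div_cancel₀] using h
  refine exists_tendsto_of_fejer hne (fun z hz k => ?_) fun p φ hφ hxφ => ?_
  · rw [dist_eq_norm, dist_eq_norm, ← pow_le_pow_iff_left₀ (norm_nonneg _) (norm_nonneg _)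
      two_ne_zero]
    linarith [hstep k z hz, sq_nonneg ‖x k - y k‖]
  · refine Set.mem_iInter.2 fun i => (hC i).symm ▸ ?_
    exact le_zero_of_tendsto_subseq_of_most_violated hcont hℓ
      (fun k => by simpa [hC] using (hP (ℓ k) (P (r k) (x k))).1) hres hφ hxφ i

/-- Global convergence of the successive cCRM with the most violated constraint control
sequence (function value version): the iterates converge to some point of `C = ∩ᵢ Cᵢ`. -/
theorem stmt9 {n m : ℕ} (f : Fin m → Euc n → ℝ)
    (hf : ∀ i, ConvexOn ℝ Set.univ (f i))
    (C : Fin m → Set (Euc n)) (hC : ∀ i, C i = {x | f i x ≤ 0})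
    (hne : (⋂ i, C i).Nonempty)
    (P : Fin m → Euc n → Euc n) (hP : ∀ i, IsProjection (C i) (P i))
    (ℓ r : ℕ → Fin m) (x : ℕ → Euc n)
    (hℓ : ∀ k : ℕ, ∀ i : Fin m, f i (x k) ≤ f (ℓ k) (x k))
    (hr : ∀ k : ℕ, ∀ i : Fin m, f i (P (ℓ k) (x k)) ≤ f (r k) (P (ℓ k) (x k)))
    (hx : ∀ k : ℕ,
      IsCircumcenter (P (ℓ k)) (P (r k)) (Zbar (P (ℓ k)) (P (r k)) (x k)) (x (k + 1))) :
    ∃ xstar ∈ ⋂ i, C i, Tendsto x atTop (nhds xstar) :=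
  stmt9_general f hf C hC hne P hP ℓ r x hℓ hx
end
end
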